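/- arXiv:1511.09016 — 3 statements merged into one kernel-verified Lean document; each statement's English description precedes it below -/
import Mathlib

section
/- For nonnegative real numbers a_1, ..., a_n (n ≥ 2), the difference between the arithmetic mean and the geometric mean satisfies (a_1 + ... + a_n)/n - (a_1 ⋯ a_n)^{1/n} ≥ (1/(n(n-1))) · Σ_{1 ≤ i < j ≤ n} (√a_i - √a_j)². -/
open Finset Real

private lemma sum_pairs {M : Type*} [AddCommMonoid M] (n : ℕ) (f : Fin n → Fin n → M) :
    ∑ p ∈ Finset.univ.filter (fun p : Fin n × Fin n => p.1 < p.2), f p.1 p.2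
      = ∑ i, ∑ j ∈ Finset.Ioi i, f i j := by
  rw [Finset.sum_filter, Fintype.sum_prod_type]
  refine Finset.sum_congr rfl fun i _ => ?_
  rw [← Finset.sum_filter]
  congr 1
  ext j
  simp [Finset.mem_Ioi]

private lemma prod_pairs {M : Type*} [CommMonoid M] (n : ℕ) (f : Fin n → Fin n → M) :
    ∏ p ∈ Finset.univ.filter (fun p : Fin n × Fin n => p.1 < p.2), f p.1 p.2
      = ∏ i, ∏ j ∈ Finset.Ioi i, f i j := by
  rw [Finset.prod_filter, Fintype.prod_prod_type]
  refine Finset.prod_congr rfl fun i _ => ?_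
  rw [← Finset.prod_filter]
  congr 1
  ext j
  simp [Finset.mem_Ioi]

private lemma inner_swap_sum (n : ℕ) (g : Fin n → ℝ) :
    ∑ i : Fin n, ∑ j ∈ Finset.Ioi i, g j = ∑ j : Fin n, (j : ℝ) * g j := by
  rw [Finset.sum_comm' (s := Finset.univ) (t := fun i => Finset.Ioi i)
      (t' := Finset.univ) (s' := fun j => Finset.Iio j)
      (by intro i j; simp [Finset.mem_Ioi, Finset.mem_Iio])]
  simp [Finset.sum_const, Fin.card_Iio, nsmul_eq_mul]

private lemma sum_pairs_add (n : ℕ) (hn : 1 ≤ n) (g : Fin n → ℝ) :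
    ∑ p ∈ Finset.univ.filter (fun p : Fin n × Fin n => p.1 < p.2), (g p.1 + g p.2)
      = ((n : ℝ) - 1) * ∑ i, g i := by
  rw [sum_pairs n (fun i j => g i + g j)]
  have h1 : ∀ i : Fin n, ∑ j ∈ Finset.Ioi i, (g i + g j)
      = ((n : ℝ) - 1 - (i : ℕ)) * g i + ∑ j ∈ Finset.Ioi i, g j := by
    intro i
    rw [Finset.sum_add_distrib, Finset.sum_const, Fin.card_Ioi, nsmul_eq_mul]
    congr 2
    have hi : (i : ℕ) ≤ n - 1 := Nat.le_sub_one_of_lt i.isLt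
    rw [Nat.cast_sub hi, Nat.cast_sub hn, Nat.cast_one]
  simp_rw [h1]
  rw [Finset.sum_add_distrib, inner_swap_sum, ← Finset.sum_add_distrib, Finset.mul_sum]
  exact Finset.sum_congr rfl fun i _ => by ring

private lemma prod_pairs_mul (n : ℕ) (a : Fin n → ℝ) :
    ∏ p ∈ Finset.univ.filter (fun p : Fin n × Fin n => p.1 < p.2), (a p.1 * a p.2)
      = ∏ i, a i ^ (n - 1) := by
  rw [prod_pairs n (fun i j => a i * a j)]
  have h1 : ∀ i : Fin n, ∏ j ∈ Finset.Ioi i, (a i * a j)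
      = a i ^ (n - 1 - (i : ℕ)) * ∏ j ∈ Finset.Ioi i, a j := by
    intro i
    rw [Finset.prod_mul_distrib, Finset.prod_const, Fin.card_Ioi]
  simp_rw [h1]
  rw [Finset.prod_mul_distrib]
  have h2 : ∏ i : Fin n, ∏ j ∈ Finset.Ioi i, a j = ∏ j : Fin n, a j ^ (j : ℕ) := by
    rw [Finset.prod_comm' (s := Finset.univ) (t := fun i => Finset.Ioi i)
        (t' := Finset.univ) (s' := fun j => Finset.Iio j)
        (by intro i j; simp [Finset.mem_Ioi, Finset.mem_Iio])]
    simp [Finset.prod_const, Fin.card_Iio]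
  rw [h2, ← Finset.prod_mul_distrib]
  refine Finset.prod_congr rfl fun i _ => ?_
  rw [← pow_add]
  congr 1
  have hi : (i : ℕ) ≤ n - 1 := Nat.le_sub_one_of_lt i.isLt
  omega

/-- Refined AM-GM: the AM-GM gap is at least the average of squared
differences of square roots over unordered pairs. -/
theorem stmt_0 (n : ℕ) (hn : 2 ≤ n) (a : Fin n → ℝ) (ha : ∀ i, 0 ≤ a i) :
    (∑ i, a i) / n - (∏ i, a i) ^ ((n : ℝ)⁻¹) ≥
      (1 / (n * (n - 1))) *
        ∑ p ∈ Finset.univ.filter (fun p : Fin n × Fin n => p.1 < p.2),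
          (Real.sqrt (a p.1) - Real.sqrt (a p.2)) ^ 2 := by
  have hn1 : (1:ℕ) ≤ n := by omega
  have hnR : (2:ℝ) ≤ n := by exact_mod_cast hn
  have hn0 : (0:ℝ) < n := by linarith
  have hn1R : (0:ℝ) < (n:ℝ) - 1 := by linarith
  set P := Finset.univ.filter (fun p : Fin n × Fin n => p.1 < p.2) with hP
  set w : ℝ := 2 / ((n:ℝ) * ((n:ℝ) - 1)) with hw
  have hw0 : 0 ≤ w := by positivity
  -- weight sum is 1
  have hcard : ∑ p ∈ P, w = 1 := by
    have h2 : ∑ p ∈ P, ((1:ℝ) + 1) = ((n:ℝ) - 1) * ∑ i : Fin n, (1:ℝ) :=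
      sum_pairs_add n hn1 (fun _ => 1)
    simp only [Finset.sum_const, nsmul_eq_mul, Finset.card_univ, Fintype.card_fin] at h2
    rw [Finset.sum_const, nsmul_eq_mul, hw]
    field_simp
    linarith
  -- the key AM-GM step
  have hpa : 0 ≤ ∏ i, a i := Finset.prod_nonneg fun i _ => ha i
  have key : (∏ i, a i) ^ ((n : ℝ)⁻¹) ≤
      ∑ p ∈ P, w * (Real.sqrt (a p.1) * Real.sqrt (a p.2)) := by
    have hgm := Real.geom_mean_le_arith_mean_weighted P (fun _ => w)
      (fun p => Real.sqrt (a p.1) * Real.sqrt (a p.2))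
      (fun _ _ => hw0) hcard
      (fun p _ => mul_nonneg (Real.sqrt_nonneg _) (Real.sqrt_nonneg _))
    refine le_trans (le_of_eq ?_) hgm
    have hprod : ∏ p ∈ P, (Real.sqrt (a p.1) * Real.sqrt (a p.2)) ^ w
        = (∏ p ∈ P, (a p.1 * a p.2)) ^ ((1:ℝ)/2 * w) := by
      rw [← Real.finset_prod_rpow P _ (fun p _ => mul_nonneg (ha _) (ha _))]
      refine Finset.prod_congr rfl fun p _ => ?_
      rw [← Real.sqrt_mul (ha _), Real.sqrt_eq_rpow,
        ← Real.rpow_mul (mul_nonneg (ha _) (ha _))]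
    rw [hprod, hP, prod_pairs_mul n a, Finset.prod_pow,
      ← Real.rpow_natCast (∏ i, a i) (n-1), ← Real.rpow_mul hpa,
      show ((n-1 : ℕ) : ℝ) * ((1:ℝ)/2 * w) = (n:ℝ)⁻¹ by
        rw [Nat.cast_sub hn1, Nat.cast_one, hw]; field_simp]
  -- expand the sum of squares
  have e1 : ∑ p ∈ P, (Real.sqrt (a p.1) - Real.sqrt (a p.2)) ^ 2
      = ((n:ℝ) - 1) * ∑ i, a i
        - 2 * ∑ p ∈ P, Real.sqrt (a p.1) * Real.sqrt (a p.2) := by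
    have expand : ∀ p : Fin n × Fin n,
        (Real.sqrt (a p.1) - Real.sqrt (a p.2)) ^ 2
          = (a p.1 + a p.2) - 2 * (Real.sqrt (a p.1) * Real.sqrt (a p.2)) := by
      intro p
      have h1 : Real.sqrt (a p.1) ^ 2 = a p.1 := Real.sq_sqrt (ha _)
      have h2 : Real.sqrt (a p.2) ^ 2 = a p.2 := Real.sq_sqrt (ha _)
      nlinarith [h1, h2]
    rw [Finset.sum_congr rfl (fun p _ => expand p), Finset.sum_sub_distrib,
      hP, sum_pairs_add n hn1 a, ← Finset.mul_sum]
  rw [ge_iff_le, e1]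
  have hS := key
  rw [← Finset.mul_sum] at hS
  have hne : (n:ℝ) * ((n:ℝ) - 1) ≠ 0 := by positivity
  rw [hw] at hS
  set S := ∑ p ∈ P, Real.sqrt (a p.1) * Real.sqrt (a p.2) with hSdef
  have : (1 / ((n:ℝ) * ((n:ℝ) - 1))) * (((n:ℝ) - 1) * ∑ i, a i - 2 * S)
      = (∑ i, a i) / n - 2 / ((n:ℝ) * ((n:ℝ) - 1)) * S := by
    field_simp
  rw [this]
  linarith
end

section
/- Let G be a nonregular connected k-uniform hypergraph (k ≥ 2) with n vertices, m edges, maximum degree Δ, diameter D, and spectral radius λ (the largest H-eigenvalue of the adjacency tensor). Then Δ - λ > k(nΔ - km) / (n·(2(k-1)·D·(nΔ - km) + k)). -/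
/-!
Put `y = |x|`; then `|λ| yᵢ^(k-1) ≤ ∑_{e ∋ i} ∏_{j ∈ e \ i} y_j`, and summing against `yᵢ`
and double counting gives
`(Δ - |λ|) ∑ yᵢ^k ≥ ∑ᵢ (Δ - dᵢ) yᵢ^k + ∑ₑ (∑_{i ∈ e} yᵢ^k - k ∏_{i ∈ e} yᵢ)`.
The first sum is at least `S · min y^k` with `S = nΔ - km > 0`. Each AM-GM defect is
nonnegative, and at least `(y_a^(k/2) - y_b^(k/2))²` for `a, b ∈ e` (apply AM-GM after
replacing `y_a^k, y_b^k` by their geometric mean). A shortest path from a maximum `B²` of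
`y^k` to a minimum `A²` uses each edge at most once, so Cauchy–Schwarz along it gives
`(B - A)² ≤ D · (total defect)`. Hence `(Δ - |λ|) ∑ yᵢ^k ≥ S A² + (B - A)²/D ≥ S B²/(1 + DS)`,
and `∑ yᵢ^k < n B²` unless `y` is constant, so `Δ - λ > S/(n(1 + DS))`; this dominates the
stated bound because `k ≤ 2(k - 1)`.
-/

open Finset

section AMGM

variable {ι : Type*}

theorem card_mul_le_sum_of_prod_eq_pow (s : Finset ι) {z : ι → ℝ} (hz : ∀ i ∈ s, 0 ≤ z i)
    {c : ℝ} (hc : 0 ≤ c) (h : ∏ i ∈ s, z i = c ^ #s) : #s * c ≤ ∑ i ∈ s, z i := by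
  rcases s.eq_empty_or_nonempty with rfl | hs
  · simp
  have hN : (0 : ℝ) < #s := by exact_mod_cast hs.card_pos
  have hw : ∑ _i ∈ s, (#s : ℝ)⁻¹ = 1 := by simp [hN.ne']
  have amgm := Real.geom_mean_le_arith_mean_weighted s (fun _ => (#s : ℝ)⁻¹) z
    (fun _ _ => by positivity) hw hz
  rw [Real.finsetProd_rpow s z hz, h, ← Real.rpow_natCast, ← Real.rpow_mul hc,
    mul_inv_cancel₀ hN.ne', Real.rpow_one, ← mul_sum] at amgm
  calc (#s : ℝ) * c ≤ #s * ((#s : ℝ)⁻¹ * ∑ i ∈ s, z i) := by gcongr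
    _ = ∑ i ∈ s, z i := by field_simp

theorem card_mul_prod_le_sum_pow (s : Finset ι) {y : ι → ℝ} (hy : ∀ i ∈ s, 0 ≤ y i) :
    #s * ∏ i ∈ s, y i ≤ ∑ i ∈ s, y i ^ #s :=
  card_mul_le_sum_of_prod_eq_pow s (fun i hi => pow_nonneg (hy i hi) _)
    (prod_nonneg hy) (prod_pow s _ y)

theorem sq_sqrt_sub_sqrt_le_sum_pow_sub [DecidableEq ι] (s : Finset ι) {y : ι → ℝ}
    (hy : ∀ i ∈ s, 0 ≤ y i) {a b : ι} (ha : a ∈ s) (hb : b ∈ s) :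
    (√(y a ^ #s) - √(y b ^ #s)) ^ 2 ≤ ∑ i ∈ s, y i ^ #s - #s * ∏ i ∈ s, y i := by
  rcases eq_or_ne a b with rfl | hab
  · simpa using card_mul_prod_le_sum_pow s hy
  set N := #s
  set r := (s.erase a).erase b
  have hbr : b ∉ r := by simp [r]
  have har : a ∉ r := by simp [r]
  have hb' : b ∈ s.erase a := mem_erase.2 ⟨hab.symm, hb⟩
  have hsum (f : ι → ℝ) : ∑ i ∈ s, f i = f a + (f b + ∑ i ∈ r, f i) := by
    rw [add_sum_erase _ _ hb', add_sum_erase _ _ ha]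
  have hprod (f : ι → ℝ) : ∏ i ∈ s, f i = f a * (f b * ∏ i ∈ r, f i) := by
    rw [mul_prod_erase _ _ hb', mul_prod_erase _ _ ha]
  have hga : √(y a ^ N) ^ 2 = y a ^ N := Real.sq_sqrt (pow_nonneg (hy a ha) N)
  have hgb : √(y b ^ N) ^ 2 = y b ^ N := Real.sq_sqrt (pow_nonneg (hy b hb) N)
  -- replacing `y a ^ N` and `y b ^ N` by their geometric mean `g` keeps the product
  let g := √(y a ^ N) * √(y b ^ N)
  let z i := if i ∈ r then y i ^ N else g
  have hzr : ∀ i ∈ r, z i = y i ^ N := fun i hi => if_pos hi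
  have hza : z a = g := if_neg har
  have hzb : z b = g := if_neg hbr
  have hamgm : N * ∏ i ∈ s, y i ≤ g + (g + ∑ i ∈ r, y i ^ N) := by
    convert card_mul_le_sum_of_prod_eq_pow s (z := z)
      (fun i hi => by unfold z; split_ifs <;> positivity [hy i hi]) (prod_nonneg hy) ?_ using 1
    · rw [hsum, sum_congr rfl hzr, hza, hzb]
    · rw [hprod, prod_congr rfl hzr, hza, hzb, ← prod_pow, hprod]
      change g * (g * _) = y a ^ N * (y b ^ N * _)
      rw [← hga, ← hgb]
      ring
  rw [hsum fun i => y i ^ N]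
  nlinarith [hga, hgb]

end AMGM

theorem sq_sub_le_mul_sum_sq_sub (g : ℕ → ℝ) (l : ℕ) :
    (g l - g 0) ^ 2 ≤ l * ∑ t ∈ range l, (g (t + 1) - g t) ^ 2 := by
  have := sq_sum_le_card_mul_sum_sq (s := range l) (f := fun t => g (t + 1) - g t)
  rwa [sum_range_sub, card_range] at this

theorem mul_sq_le_one_add_mul_mul (c A B : ℝ) :
    c * B ^ 2 ≤ (1 + c) * (c * A ^ 2 + (B - A) ^ 2) := by
  nlinarith [sq_nonneg (c * A - (B - A))]

theorem div_one_add_mul_lt_of_le_mul {S D N T Q X : ℝ} (hS : 0 < S) (hD : 0 < D) (hN : 0 < N)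
    (hT : 0 < T) (hTQ : T ≤ N * Q) (hX : S * Q ≤ X * T) : S / (N * (1 + D * S)) < X := by
  have hSN : S ≤ N * X := le_of_mul_le_mul_right (by nlinarith) hT
  calc S / (N * (1 + D * S)) < S / N :=
        div_lt_div_of_pos_left hS hN (lt_mul_of_one_lt_right hN (by nlinarith))
    _ ≤ X := (div_le_iff₀' hN).2 hSN

theorem div_one_add_mul_lt_of_sq_sub_le {S D N T A B F X : ℝ} (hS : 0 < S) (hD : 0 < D)
    (hN : 0 < N) (hT : 0 < T) (hTB : T < N * B ^ 2) (hF : (B - A) ^ 2 ≤ D * F)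
    (hX : S * A ^ 2 + F ≤ X * T) : S / (N * (1 + D * S)) < X := by
  have hDS : 0 < D * S := mul_pos hD hS
  have hB : S * B ^ 2 ≤ (1 + D * S) * (X * T) := by
    have h := mul_sq_le_one_add_mul_mul (D * S) A B
    have h' : D * S * A ^ 2 + (B - A) ^ 2 ≤ D * (X * T) := by nlinarith
    nlinarith
  rw [div_lt_iff₀ (by positivity)]
  have : S * T < N * (S * B ^ 2) := by nlinarith
  nlinarith

theorem mul_div_le_div_one_add_mul {k N D S : ℝ} (hk : 2 ≤ k) (hN : 0 < N) (hD : 0 ≤ D)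
    (hS : 0 ≤ S) : k * S / (N * (2 * (k - 1) * D * S + k)) ≤ S / (N * (1 + D * S)) := by
  have hDS : 0 ≤ (k - 1) * D * S := mul_nonneg (mul_nonneg (by linarith) hD) hS
  rw [div_le_div_iff₀ (by nlinarith) (by positivity)]
  nlinarith [mul_nonneg (mul_nonneg (sub_nonneg.2 hk) (mul_nonneg hD hS)) (mul_nonneg hS hN.le)]

def amgmDefect {V : Type*} (k : ℕ) (y : V → ℝ) (e : Finset V) : ℝ :=
  ∑ i ∈ e, y i ^ k - k * ∏ i ∈ e, y i

section amgmDefect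

variable {V : Type*} {k : ℕ} {y : V → ℝ} {e : Finset V}

theorem amgmDefect_nonneg (he : #e = k) (hy : ∀ i ∈ e, 0 ≤ y i) : 0 ≤ amgmDefect k y e := by
  subst he
  exact sub_nonneg.2 (card_mul_prod_le_sum_pow e hy)

theorem sq_sqrt_sub_sqrt_le_amgmDefect [DecidableEq V] (he : #e = k) (hy : ∀ i ∈ e, 0 ≤ y i)
    {a b : V} (ha : a ∈ e) (hb : b ∈ e) : (√(y a ^ k) - √(y b ^ k)) ^ 2 ≤ amgmDefect k y e := by
  subst he
  exact sq_sqrt_sub_sqrt_le_sum_pow_sub e hy ha hb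

end amgmDefect

namespace Hypergraph

section Walks

variable {V : Type*} (E : Finset (Finset V))

def pathLengths (i j : V) : Set ℕ :=
  {l | ∃ p : Fin (l + 1) → V, p 0 = i ∧ p (Fin.last l) = j ∧
    ∀ t : Fin l, ∃ e ∈ E, p t.castSucc ∈ e ∧ p t.succ ∈ e}

def IsEdgeWalk (P : ℕ → V) (ed : ℕ → Finset V) (l : ℕ) : Prop :=
  ∀ t < l, ed t ∈ E ∧ P t ∈ ed t ∧ P (t + 1) ∈ ed t

variable {E}

theorem pos_of_mem_pathLengths {i j : V} {l : ℕ} (h : l ∈ pathLengths E i j) (hij : i ≠ j) :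
    0 < l := by
  obtain ⟨p, hp0, hpl, -⟩ := h
  refine Nat.pos_of_ne_zero fun hl => hij ?_
  subst hl
  exact hp0.symm.trans hpl

theorem exists_isEdgeWalk_of_mem_pathLengths {i j : V} {l : ℕ} (h : l ∈ pathLengths E i j) :
    ∃ P ed, P 0 = i ∧ P l = j ∧ IsEdgeWalk E P ed l := by
  obtain ⟨p, hp0, hpl, hstep⟩ := h
  choose ed hed using hstep
  refine ⟨fun t => p ⟨min t l, by omega⟩, fun t => if ht : t < l then ed ⟨t, ht⟩ else ∅,
    ?_, ?_, fun t ht => ?_⟩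
  · simpa using hp0
  · convert hpl using 2; ext; simp
  · obtain ⟨he, h1, h2⟩ := hed ⟨t, ht⟩
    simp only [ht, dite_true]
    refine ⟨he, ?_, ?_⟩
    · convert h1 using 2; ext; simp; omega
    · convert h2 using 2; ext; simp; omega

theorem IsEdgeWalk.mem_pathLengths {P : ℕ → V} {ed : ℕ → Finset V} {l : ℕ}
    (h : IsEdgeWalk E P ed l) : l ∈ pathLengths E (P 0) (P l) :=
  ⟨fun s => P s, rfl, rfl, fun t => ⟨ed t, h t t.isLt⟩⟩

theorem IsEdgeWalk.shortcut {P : ℕ → V} {ed : ℕ → Finset V} {l t₁ t₂ : ℕ}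
    (h : IsEdgeWalk E P ed l) (h₁₂ : t₁ < t₂) (h₂ : t₂ < l) (heq : ed t₁ = ed t₂) :
    IsEdgeWalk E (fun s => if s ≤ t₁ then P s else P (s + (t₂ - t₁)))
      (fun s => if s < t₁ then ed s else ed (s + (t₂ - t₁))) (l - (t₂ - t₁)) := by
  intro s hs
  rcases lt_trichotomy s t₁ with hs₁ | rfl | hs₁
  · simpa [hs₁, hs₁.le, Nat.succ_le_of_lt hs₁] using h s (by omega)
  · simp only [lt_irrefl, le_refl, if_true, if_false, Nat.not_succ_le_self,
      show s + (t₂ - s) = t₂ by omega, show s + 1 + (t₂ - s) = t₂ + 1 by omega]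
    exact ⟨(h t₂ h₂).1, heq ▸ (h s (by omega)).2.1, (h t₂ h₂).2.2⟩
  · simp only [show ¬ s ≤ t₁ by omega, show ¬ s < t₁ by omega, show ¬ s + 1 ≤ t₁ by omega,
      if_false, show s + 1 + (t₂ - t₁) = s + (t₂ - t₁) + 1 by omega]
    exact h (s + (t₂ - t₁)) (by omega)

theorem exists_isEdgeWalk_injOn {i j : V} {l : ℕ} (h : IsLeast (pathLengths E i j) l) :
    ∃ P ed, P 0 = i ∧ P l = j ∧ IsEdgeWalk E P ed l ∧ Set.InjOn ed (Set.Iio l) := by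
  obtain ⟨P, ed, hP0, hPl, hwalk⟩ := exists_isEdgeWalk_of_mem_pathLengths h.1
  refine ⟨P, ed, hP0, hPl, hwalk, ?_⟩
  have key : ∀ t₁ t₂, t₁ < t₂ → t₂ < l → ed t₁ ≠ ed t₂ := by
    intro t₁ t₂ h₁₂ h₂ heq
    have hshort := (hwalk.shortcut h₁₂ h₂ heq).mem_pathLengths
    simp only [show ¬ l - (t₂ - t₁) ≤ t₁ by omega,
      show l - (t₂ - t₁) + (t₂ - t₁) = l by omega, if_false, hP0, hPl] at hshort
    have := h.2 hshort
    omega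
  intro t₁ h₁ t₂ h₂ heq
  rcases lt_trichotomy t₁ t₂ with h₁₂ | h₁₂ | h₁₂
  · exact absurd heq (key _ _ h₁₂ h₂)
  · exact h₁₂
  · exact absurd heq.symm (key _ _ h₁₂ h₁)

end Walks

variable {V : Type*} [DecidableEq V] {E : Finset (Finset V)} {k : ℕ}

def degree (E : Finset (Finset V)) (i : V) : ℕ := #{e ∈ E | i ∈ e}

theorem abs_mul_abs_pow_le_sum_prod_abs {x : V → ℝ} {lam : ℝ}
    (hx : ∀ i, ∑ e ∈ E with i ∈ e, ∏ j ∈ e.erase i, x j = lam * x i ^ (k - 1)) (i : V) :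
    |lam| * |x i| ^ (k - 1) ≤ ∑ e ∈ E with i ∈ e, ∏ j ∈ e.erase i, |x j| := by
  rw [← abs_pow, ← abs_mul, ← hx i]
  exact (abs_sum_le_sum_abs _ _).trans_eq (sum_congr rfl fun e _ => abs_prod _ _)

theorem sq_sqrt_sub_sqrt_le_mul_sum_amgmDefect (hunif : ∀ e ∈ E, #e = k) {y : V → ℝ}
    (hy : ∀ i, 0 ≤ y i) {u v : V} {l : ℕ} (hl : l ∈ pathLengths E u v) :
    (√(y u ^ k) - √(y v ^ k)) ^ 2 ≤ l * ∑ e ∈ E, amgmDefect k y e := by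
  have hgeo : IsLeast (pathLengths E u v) (sInf (pathLengths E u v)) :=
    ⟨Nat.sInf_mem ⟨l, hl⟩, fun _ hm => Nat.sInf_le hm⟩
  obtain ⟨P, ed, hP0, hPl, hwalk, hinj⟩ := exists_isEdgeWalk_injOn hgeo
  set l₀ := sInf (pathLengths E u v)
  have hl₀ : (l₀ : ℝ) ≤ l := by exact_mod_cast Nat.sInf_le hl
  have hdef : 0 ≤ ∑ e ∈ E, amgmDefect k y e :=
    sum_nonneg fun e he => amgmDefect_nonneg (hunif e he) fun i _ => hy i
  let g t := √(y (P t) ^ k)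
  calc (√(y u ^ k) - √(y v ^ k)) ^ 2 = (g l₀ - g 0) ^ 2 := by simp only [g, hP0, hPl]; ring
    _ ≤ l₀ * ∑ t ∈ range l₀, (g (t + 1) - g t) ^ 2 := sq_sub_le_mul_sum_sq_sub g l₀
    _ ≤ l₀ * ∑ t ∈ range l₀, amgmDefect k y (ed t) := by
        gcongr with t ht
        obtain ⟨he, h1, h2⟩ := hwalk t (mem_range.1 ht)
        exact sq_sqrt_sub_sqrt_le_amgmDefect (hunif _ he) (fun i _ => hy i) h2 h1
    _ = l₀ * ∑ e ∈ (range l₀).image ed, amgmDefect k y e := by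
        rw [sum_image (by simpa using hinj)]
    _ ≤ l₀ * ∑ e ∈ E, amgmDefect k y e := by
        refine mul_le_mul_of_nonneg_left (sum_le_sum_of_subset_of_nonneg ?_ fun e he _ =>
          amgmDefect_nonneg (hunif e he) fun i _ => hy i) (Nat.cast_nonneg _)
        simp only [subset_iff, mem_image, mem_range]
        rintro _ ⟨t, ht, rfl⟩
        exact (hwalk t ht).1
    _ ≤ l * ∑ e ∈ E, amgmDefect k y e := mul_le_mul_of_nonneg_right hl₀ hdef

variable [Fintype V]

theorem sum_sum_filter_mem (E : Finset (Finset V)) {M : Type*} [AddCommMonoid M]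
    (F : V → Finset V → M) : ∑ i, ∑ e ∈ E with i ∈ e, F i e = ∑ e ∈ E, ∑ i ∈ e, F i e :=
  sum_comm' (by simp [and_comm])

theorem sum_degree (hunif : ∀ e ∈ E, #e = k) : ∑ i, degree E i = k * #E :=
  calc ∑ i, degree E i = ∑ e ∈ E, #e := by
        simp only [degree, card_eq_sum_ones, sum_sum_filter_mem E fun _ _ => 1]
    _ = k * #E := by rw [sum_congr rfl hunif, sum_const, smul_eq_mul, mul_comm]

theorem sum_amgmDefect (y : V → ℝ) :
    ∑ e ∈ E, amgmDefect k y e = ∑ i, degree E i * y i ^ k - k * ∑ e ∈ E, ∏ i ∈ e, y i := by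
  simp only [amgmDefect, sum_sub_distrib, ← mul_sum, ← sum_sum_filter_mem E fun i _ => y i ^ k,
    degree, sum_const, nsmul_eq_mul]

theorem mul_sum_pow_le_of_le_sum_prod_erase (hk : 1 ≤ k) (hunif : ∀ e ∈ E, #e = k)
    {y : V → ℝ} (hy : ∀ i, 0 ≤ y i) {μ : ℝ}
    (hsub : ∀ i, μ * y i ^ (k - 1) ≤ ∑ e ∈ E with i ∈ e, ∏ j ∈ e.erase i, y j) :
    μ * ∑ i, y i ^ k ≤ k * ∑ e ∈ E, ∏ i ∈ e, y i :=
  calc μ * ∑ i, y i ^ k = ∑ i, μ * y i ^ (k - 1) * y i := by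
        rw [mul_sum]; congr! 1 with i; rw [mul_assoc, pow_sub_one_mul (by omega)]
    _ ≤ ∑ i, (∑ e ∈ E with i ∈ e, ∏ j ∈ e.erase i, y j) * y i := by
        gcongr with i; exacts [hy i, hsub i]
    _ = ∑ e ∈ E, ∑ i ∈ e, y i * ∏ j ∈ e.erase i, y j := by
        rw [← sum_sum_filter_mem]; simp only [sum_mul, mul_comm (y _)]
    _ = k * ∑ e ∈ E, ∏ i ∈ e, y i := by
        rw [mul_sum]
        refine sum_congr rfl fun e he => ?_
        rw [sum_congr rfl fun i hi => mul_prod_erase e y hi, sum_const, hunif e he, nsmul_eq_mul]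

theorem sum_sub_degree_mul_add_sum_amgmDefect_le {Δ : ℝ} (hΔ : ∀ i, (degree E i : ℝ) ≤ Δ)
    {y : V → ℝ} (hy : ∀ i, 0 ≤ y i) {v : V} (hv : ∀ i, y v ≤ y i) {μ : ℝ}
    (hμ : μ * ∑ i, y i ^ k ≤ k * ∑ e ∈ E, ∏ i ∈ e, y i) :
    (∑ i, (Δ - degree E i)) * y v ^ k + ∑ e ∈ E, amgmDefect k y e ≤
      (Δ - μ) * ∑ i, y i ^ k := by
  have hmin : ∑ i, (Δ - degree E i) * y v ^ k ≤ ∑ i, (Δ - degree E i) * y i ^ k :=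
    sum_le_sum fun i _ =>
      mul_le_mul_of_nonneg_left (pow_le_pow_left₀ (hy v) (hv i) k) (sub_nonneg.2 (hΔ i))
  have hsplit : ∑ i, (Δ - degree E i) * y i ^ k = Δ * ∑ i, y i ^ k - ∑ i, degree E i * y i ^ k := by
    simp only [sub_mul, sum_sub_distrib, mul_sum]
  rw [sum_mul, sum_amgmDefect, sub_mul]
  linarith

theorem div_one_add_mul_lt_sub_of_le_sum_prod_erase (hk : 1 ≤ k) (hunif : ∀ e ∈ E, #e = k)
    {Δ : ℝ} (hΔ : ∀ i, (degree E i : ℝ) ≤ Δ) (hS : 0 < ∑ i, (Δ - degree E i))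
    {D : ℕ} (hD : 0 < D) (hdiam : ∀ i j, ∃ l ≤ D, l ∈ pathLengths E i j)
    {y : V → ℝ} (hy : ∀ i, 0 ≤ y i) (hy0 : y ≠ 0) {μ : ℝ}
    (hsub : ∀ i, μ * y i ^ (k - 1) ≤ ∑ e ∈ E with i ∈ e, ∏ j ∈ e.erase i, y j) :
    (∑ i, (Δ - degree E i)) / (Fintype.card V * (1 + D * ∑ i, (Δ - degree E i))) < Δ - μ := by
  obtain ⟨w, hw⟩ := Function.ne_iff.1 hy0
  have hN : (0 : ℝ) < Fintype.card V := by exact_mod_cast Fintype.card_pos_iff.2 ⟨w⟩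
  have hD' : (0 : ℝ) < D := by exact_mod_cast hD
  have hT : 0 < ∑ i, y i ^ k :=
    sum_pos' (fun i _ => pow_nonneg (hy i) k) ⟨w, mem_univ w, pow_pos ((hy w).lt_of_ne' hw) k⟩
  obtain ⟨u, -, hu⟩ := exists_max_image univ y ⟨w, mem_univ w⟩
  obtain ⟨v, -, hv⟩ := exists_min_image univ y ⟨w, mem_univ w⟩
  have hdef : 0 ≤ ∑ e ∈ E, amgmDefect k y e :=
    sum_nonneg fun e he => amgmDefect_nonneg (hunif e he) fun i _ => hy i
  have henergy := sum_sub_degree_mul_add_sum_amgmDefect_le hΔ hy (fun i => hv i (mem_univ i))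
    (mul_sum_pow_le_of_le_sum_prod_erase hk hunif hy hsub)
  rcases (hv u (mem_univ u)).lt_or_eq with hlt | hconst
  · obtain ⟨l, hlD, hl⟩ := hdiam u v
    have hgap := (sq_sqrt_sub_sqrt_le_mul_sum_amgmDefect hunif hy hl).trans
      (mul_le_mul_of_nonneg_right (Nat.cast_le.2 hlD) hdef)
    refine div_one_add_mul_lt_of_sq_sub_le hS hD' hN hT ?_ hgap ?_
    · rw [Real.sq_sqrt (pow_nonneg (hy u) k)]
      refine (sum_lt_sum (fun i _ => pow_le_pow_left₀ (hy i) (hu i (mem_univ i)) k)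
        ⟨v, mem_univ v, pow_lt_pow_left₀ hlt (hy v) (by omega)⟩).trans_eq ?_
      simp
    · rwa [Real.sq_sqrt (pow_nonneg (hy v) k)]
  · have hTu : ∑ i, y i ^ k ≤ Fintype.card V * y u ^ k := by
      simpa using sum_le_card_nsmul univ _ _ fun i _ =>
        pow_le_pow_left₀ (hy i) (hu i (mem_univ i)) k
    refine div_one_add_mul_lt_of_le_mul hS hD' hN hT hTu ?_
    rw [← hconst]
    linarith

end Hypergraph

theorem stmt_13_general (n k : ℕ) (hk : 2 ≤ k)
    (E : Finset (Finset (Fin n))) (hunif : ∀ e ∈ E, e.card = k)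
    (d : Fin n → ℕ) (hd : ∀ i, d i = (E.filter (fun e => i ∈ e)).card)
    (Δ : ℕ) (hΔub : ∀ i, d i ≤ Δ)
    (hnonreg : ∃ i j : Fin n, d i ≠ d j)
    (D : ℕ)
    -- `D` is the diameter: every pair of vertices is joined by a path of
    -- length at most `D`, and some pair requires length exactly `D`.
    (dist : Fin n → Fin n → ℕ)
    (hdist : ∀ i j : Fin n, IsLeast {l : ℕ | ∃ p : Fin (l + 1) → Fin n,
        p 0 = i ∧ p (Fin.last l) = j ∧
        ∀ t : Fin l, ∃ e ∈ E, p t.castSucc ∈ e ∧ p t.succ ∈ e} (dist i j))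
    (hDdiam : (∀ i j : Fin n, dist i j ≤ D) ∧ ∃ i j : Fin n, dist i j = D)
    (lam : ℝ)
    (heig : ∃ x : Fin n → ℝ, x ≠ 0 ∧ ∀ i : Fin n,
      ∑ e ∈ E.filter (fun e => i ∈ e), ∏ j ∈ e.erase i, x j = lam * x i ^ (k - 1)) :
    (Δ : ℝ) - lam >
      (k : ℝ) * ((n : ℝ) * Δ - k * E.card) /
        ((n : ℝ) * (2 * ((k : ℝ) - 1) * D * ((n : ℝ) * Δ - k * E.card) + k)) := by
  obtain ⟨x, hx0, hx⟩ := heig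
  obtain rfl : d = Hypergraph.degree E := funext hd
  obtain ⟨i₀, j₀, hij⟩ := hnonreg
  have hS : ∑ i, ((Δ : ℝ) - Hypergraph.degree E i) = n * Δ - k * #E := by
    simp only [sum_sub_distrib, sum_const, card_univ, Fintype.card_fin, nsmul_eq_mul]
    rw [← Nat.cast_sum, Hypergraph.sum_degree hunif]
    push_cast
    ring
  obtain ⟨w, hw⟩ : ∃ w, Hypergraph.degree E w < Δ := by
    by_contra! h
    exact hij (((hΔub i₀).antisymm (h i₀)).trans ((hΔub j₀).antisymm (h j₀)).symm)
  have hS0 : 0 < ∑ i, ((Δ : ℝ) - Hypergraph.degree E i) :=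
    sum_pos' (fun i _ => sub_nonneg.2 (by exact_mod_cast hΔub i))
      ⟨w, mem_univ w, sub_pos.2 (by exact_mod_cast hw)⟩
  have hD : 0 < D := (Hypergraph.pos_of_mem_pathLengths (hdist i₀ j₀).1
    (ne_of_apply_ne _ hij)).trans_le (hDdiam.1 i₀ j₀)
  have key := Hypergraph.div_one_add_mul_lt_sub_of_le_sum_prod_erase (by omega) hunif
    (fun i => by exact_mod_cast hΔub i) hS0 hD (fun i j => ⟨dist i j, hDdiam.1 i j, (hdist i j).1⟩)
    (fun i => abs_nonneg (x i)) (by simpa [funext_iff] using hx0)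
    (Hypergraph.abs_mul_abs_pow_le_sum_prod_abs hx)
  rw [hS, Fintype.card_fin] at key
  rw [hS] at hS0
  calc _ ≤ _ := mul_div_le_div_one_add_mul (by exact_mod_cast hk) (by exact_mod_cast i₀.pos)
        D.cast_nonneg hS0.le
    _ < Δ - |lam| := key
    _ ≤ Δ - lam := by linarith [le_abs_self lam]

/-- Cioabă–Gregory–Nikiforov type bound for nonregular connected k-uniform
hypergraphs.  Here `E` is the edge set of a `k`-uniform hypergraph on `n`
vertices, `d` the degree function, `Δ` the maximum degree, `D` the diameter,
and `lam` the largest H-eigenvalue of the adjacency tensor, witnessed by the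
eigenvalue equation `∑_{e ∋ i} ∏_{j ∈ e \ {i}} x j = lam * (x i)^(k-1)`. -/
theorem stmt_13 (n k : ℕ) (hk : 2 ≤ k) (hn : 0 < n)
    (E : Finset (Finset (Fin n))) (hunif : ∀ e ∈ E, e.card = k)
    (d : Fin n → ℕ) (hd : ∀ i, d i = (E.filter (fun e => i ∈ e)).card)
    (Δ : ℕ) (hΔub : ∀ i, d i ≤ Δ) (hΔmem : ∃ i, d i = Δ)
    (hnonreg : ∃ i j : Fin n, d i ≠ d j)
    (hconn : ∀ i j : Fin n,
      Relation.ReflTransGen (fun a b => ∃ e ∈ E, a ∈ e ∧ b ∈ e ∧ a ≠ b) i j)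
    (D : ℕ)
    -- `D` is the diameter: every pair of vertices is joined by a path of
    -- length at most `D`, and some pair requires length exactly `D`.
    (dist : Fin n → Fin n → ℕ)
    (hdist : ∀ i j : Fin n, IsLeast {l : ℕ | ∃ p : Fin (l + 1) → Fin n,
        p 0 = i ∧ p (Fin.last l) = j ∧
        ∀ t : Fin l, ∃ e ∈ E, p t.castSucc ∈ e ∧ p t.succ ∈ e} (dist i j))
    (hDdiam : (∀ i j : Fin n, dist i j ≤ D) ∧ ∃ i j : Fin n, dist i j = D)
    (lam : ℝ)
    (heig : ∃ x : Fin n → ℝ, x ≠ 0 ∧ ∀ i : Fin n,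
      ∑ e ∈ E.filter (fun e => i ∈ e), ∏ j ∈ e.erase i, x j = lam * x i ^ (k - 1))
    (hmax : ∀ ν : ℝ, (∃ x : Fin n → ℝ, x ≠ 0 ∧ ∀ i : Fin n,
      ∑ e ∈ E.filter (fun e => i ∈ e), ∏ j ∈ e.erase i, x j = ν * x i ^ (k - 1)) →
      ν ≤ lam) :
    (Δ : ℝ) - lam >
      (k : ℝ) * ((n : ℝ) * Δ - k * E.card) /
        ((n : ℝ) * (2 * ((k : ℝ) - 1) * D * ((n : ℝ) * Δ - k * E.card) + k)) :=
  stmt_13_general n k hk E hunif d hd Δ hΔub hnonreg D dist hdist hDdiam lam heig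
end

section
/- Let k be even and let G be a connected odd-bipartite k-uniform hypergraph. If x is an eigenvector for the spectral radius ρ(G), and V_1 ⊆ V(G) is a set such that every edge meets V_1 in an odd number of vertices, then the vector y defined by y_i = -x_i for i ∈ V_1 and y_i = x_i otherwise satisfies A_G y^{k-1} = -ρ(G)·y^{[k-1]}; hence -ρ(G) is an H-eigenvalue of G and μ(G) = -ρ(G). -/
/-- For a connected odd-bipartite `k`-uniform hypergraph with `k` even,
negating an eigenvector of the spectral radius `ρ` on the odd side `V₁`
gives an eigenvector for `-ρ`; hence `-ρ` is an H-eigenvalue and the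
minimum H-eigenvalue `μ` equals `-ρ`. -/
theorem stmt_17 (n k : ℕ) (hk : 2 ≤ k) (hke : Even k)
    (E : Finset (Finset (Fin n))) (hunif : ∀ e ∈ E, e.card = k)
    (hconn : ∀ i j : Fin n,
      Relation.ReflTransGen (fun a b => ∃ e ∈ E, a ∈ e ∧ b ∈ e ∧ a ≠ b) i j)
    (V₁ : Finset (Fin n)) (hV₁ : V₁ ⊂ Finset.univ)
    (hodd : ∀ e ∈ E, Odd (e ∩ V₁).card)
    (ρ : ℝ) (x : Fin n → ℝ) (hx : x ≠ 0)
    (heig : ∀ i : Fin n,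
      ∑ e ∈ E.filter (fun e => i ∈ e), ∏ j ∈ e.erase i, x j = ρ * x i ^ (k - 1))
    (hρ : ∀ ν : ℝ, (∃ y : Fin n → ℝ, y ≠ 0 ∧ ∀ i : Fin n,
      ∑ e ∈ E.filter (fun e => i ∈ e), ∏ j ∈ e.erase i, y j = ν * y i ^ (k - 1)) →
      |ν| ≤ ρ)
    (μ : ℝ)
    (hμeig : ∃ y : Fin n → ℝ, y ≠ 0 ∧ ∀ i : Fin n,
      ∑ e ∈ E.filter (fun e => i ∈ e), ∏ j ∈ e.erase i, y j = μ * y i ^ (k - 1))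
    (hμmin : ∀ ν : ℝ, (∃ y : Fin n → ℝ, y ≠ 0 ∧ ∀ i : Fin n,
      ∑ e ∈ E.filter (fun e => i ∈ e), ∏ j ∈ e.erase i, y j = ν * y i ^ (k - 1)) →
      μ ≤ ν) :
    (∀ i : Fin n,
      ∑ e ∈ E.filter (fun e => i ∈ e),
          ∏ j ∈ e.erase i, (if j ∈ V₁ then -x j else x j) =
        (-ρ) * (if i ∈ V₁ then -x i else x i) ^ (k - 1)) ∧
    (∃ y : Fin n → ℝ, y ≠ 0 ∧ ∀ i : Fin n,
      ∑ e ∈ E.filter (fun e => i ∈ e), ∏ j ∈ e.erase i, y j = (-ρ) * y i ^ (k - 1)) ∧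
    μ = -ρ := by

  have hk1 : Odd (k - 1) := Nat.Even.sub_odd (by omega) hke odd_one
  have key : ∀ i : Fin n,
      ∑ e ∈ E.filter (fun e => i ∈ e),
          ∏ j ∈ e.erase i, (if j ∈ V₁ then -x j else x j) =
        (-ρ) * (if i ∈ V₁ then -x i else x i) ^ (k - 1) := by
    intro i
    have hsum : ∀ e ∈ E.filter (fun e => i ∈ e),
        ∏ j ∈ e.erase i, (if j ∈ V₁ then -x j else x j)
          = (if i ∈ V₁ then (1:ℝ) else -1) * ∏ j ∈ e.erase i, x j := by
      intro e he
      simp only [Finset.mem_filter] at he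
      obtain ⟨heE, hie⟩ := he
      have hstep : ∀ j ∈ e.erase i,
          (if j ∈ V₁ then -x j else x j) = (if j ∈ V₁ then (-1:ℝ) else 1) * x j := by
        intro j _; split <;> ring
      rw [Finset.prod_congr rfl hstep, Finset.prod_mul_distrib]
      congr 1
      have h1 : ∏ j ∈ e.erase i, (if j ∈ V₁ then (-1:ℝ) else 1)
          = (-1 : ℝ) ^ ((e.erase i) ∩ V₁).card := by
        rw [Finset.prod_ite_mem, Finset.prod_const]
      rw [h1, Finset.erase_inter]
      obtain ⟨m, hm⟩ := hodd e heE
      by_cases hiV : i ∈ V₁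
      · have hmem : i ∈ e ∩ V₁ := Finset.mem_inter.2 ⟨hie, hiV⟩
        rw [Finset.card_erase_of_mem hmem, hm]
        simp [pow_succ, pow_mul, Nat.add_sub_cancel, hiV]
      · have hmem : i ∉ e ∩ V₁ := fun h => hiV (Finset.mem_inter.1 h).2
        rw [Finset.erase_eq_of_notMem hmem, hm]
        simp [pow_succ, pow_mul, hiV]
    rw [Finset.sum_congr rfl hsum, ← Finset.mul_sum, heig i]
    by_cases hiV : i ∈ V₁
    · simp only [hiV, if_true]
      rw [hk1.neg_pow]
      ring
    · simp only [hiV, if_false]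
      ring
  refine ⟨key, ?_, ?_⟩
  · refine ⟨fun i => if i ∈ V₁ then -x i else x i, ?_, key⟩
    intro h
    apply hx
    funext i
    have := congrFun h i
    by_cases hiV : i ∈ V₁ <;> simp [hiV] at this <;> simp [this]
  · have h1 : μ ≤ -ρ := hμmin (-ρ)
      ⟨fun i => if i ∈ V₁ then -x i else x i, by
        intro h
        apply hx
        funext i
        have := congrFun h i
        by_cases hiV : i ∈ V₁ <;> simp [hiV] at this <;> simp [this], key⟩
    have h2 : |μ| ≤ ρ := hρ μ hμeig
    have h3 : -ρ ≤ μ := neg_le.1 (le_trans (neg_le_abs μ) h2)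
    linarith
end
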